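/- arXiv:2005.07166 — 3 statements merged into one kernel-verified Lean document; each statement's English description precedes it below -/
import Mathlib

section
/- Conic combination property (Lemma 2.3): for any λ₁ > 0, λ₀ ≥ 0, U₁ ∈ G, and U₀ ∈ Ḡ, the state λ₁U₁ + λ₀U₀ belongs to G. -/
open scoped RealInnerProductSpace

/-- A state `U = (ρ, m, E)` in `ℝ × ℝ^d × ℝ`. -/
abbrev EulerState (d : ℕ) : Type := ℝ × EuclideanSpace ℝ (Fin d) × ℝ

/-- `𝒢(ρ, m, E) = E − ‖m‖²/(2ρ)`. -/
noncomputable def calG {d : ℕ} (U : EulerState d) : ℝ :=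
  U.2.2 - ‖U.2.1‖ ^ 2 / (2 * U.1)

/-- The admissible set `G = {(ρ, m, E) : ρ > 0, E − ‖m‖²/(2ρ) > 0}`. -/
noncomputable def admG (d : ℕ) : Set (EulerState d) :=
  {U | 0 < U.1 ∧ 0 < calG U}

/-! Clearing the denominator, `G` is `{ρ > 0, ‖m‖² < 2ρE}` and `Ḡ` lies in the closed convex cone
`{ρ ≥ 0, E ≥ 0, ‖m‖² ≤ 2ρE}`. Both are stable under positive scaling, and the sum of a point of `G`
and a point of that cone lies in `G`: with `a = ‖m₁‖`, `b = ‖m₀‖`, the cross term `2ab` is bounded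
by `2(ρ₁E₀ + ρ₀E₁)` because `(ab)² ≤ 4ρ₁E₁ρ₀E₀ ≤ (ρ₁E₀ + ρ₀E₁)²` (AM-GM). -/

lemma mul_le_of_sq_le_two_mul {a b p q r s : ℝ} (ha : 0 ≤ a) (hb : 0 ≤ b) (hp : 0 ≤ p)
    (hq : 0 ≤ q) (hr : 0 ≤ r) (hs : 0 ≤ s) (hab : a ^ 2 ≤ 2 * p * q) (hrs : b ^ 2 ≤ 2 * r * s) :
    a * b ≤ p * s + r * q := by
  have hsq : (a * b) ^ 2 ≤ (p * s + r * q) ^ 2 :=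
    calc (a * b) ^ 2 = a ^ 2 * b ^ 2 := mul_pow a b 2
      _ ≤ (2 * p * q) * (2 * r * s) := mul_le_mul hab hrs (sq_nonneg b) (by positivity)
      _ ≤ (p * s + r * q) ^ 2 := by nlinarith [sq_nonneg (p * s - r * q)]
  exact (pow_le_pow_iff_left₀ (by positivity) (by positivity) two_ne_zero).mp hsq

lemma norm_add_sq_lt {V : Type*} [SeminormedAddCommGroup V] {x y : V} {ρ₁ e₁ ρ₀ e₀ : ℝ}
    (hρ₁ : 0 ≤ ρ₁) (hx : ‖x‖ ^ 2 < 2 * ρ₁ * e₁) (hρ₀ : 0 ≤ ρ₀) (he₀ : 0 ≤ e₀)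
    (hy : ‖y‖ ^ 2 ≤ 2 * ρ₀ * e₀) :
    ‖x + y‖ ^ 2 < 2 * (ρ₁ + ρ₀) * (e₁ + e₀) := by
  have he₁ : 0 ≤ e₁ := by
    by_contra! h
    nlinarith [sq_nonneg ‖x‖, mul_nonpos_of_nonneg_of_nonpos hρ₁ h.le]
  have hcross := mul_le_of_sq_le_two_mul (norm_nonneg x) (norm_nonneg y) hρ₁ he₁ hρ₀ he₀ hx.le hy
  calc ‖x + y‖ ^ 2 ≤ (‖x‖ + ‖y‖) ^ 2 := by gcongr; exact norm_add_le x y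
    _ < 2 * (ρ₁ + ρ₀) * (e₁ + e₀) := by nlinarith

def closedAdmG (d : ℕ) : Set (EulerState d) :=
  {U | 0 ≤ U.1 ∧ 0 ≤ U.2.2 ∧ ‖U.2.1‖ ^ 2 ≤ 2 * U.1 * U.2.2}

lemma mem_admG_iff {d : ℕ} {U : EulerState d} :
    U ∈ admG d ↔ 0 < U.1 ∧ ‖U.2.1‖ ^ 2 < 2 * U.1 * U.2.2 := by
  refine and_congr_right fun hρ => ?_
  rw [calG, sub_pos, div_lt_iff₀ (by positivity), mul_comm]

lemma admG_subset_closedAdmG (d : ℕ) : admG d ⊆ closedAdmG d := by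
  intro U hU
  obtain ⟨hρ, hm⟩ := mem_admG_iff.mp hU
  refine ⟨hρ.le, ?_, hm.le⟩
  by_contra! h
  nlinarith [sq_nonneg ‖U.2.1‖]

lemma isClosed_closedAdmG (d : ℕ) : IsClosed (closedAdmG d) := by
  have hρ : Continuous fun U : EulerState d => U.1 := continuous_fst
  have hm : Continuous fun U : EulerState d => U.2.1 := continuous_snd.fst
  have hE : Continuous fun U : EulerState d => U.2.2 := continuous_snd.snd
  exact (isClosed_le continuous_const hρ).inter <| (isClosed_le continuous_const hE).inter <|
    isClosed_le (hm.norm.pow 2) ((continuous_const.mul hρ).mul hE)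

lemma closure_admG_subset (d : ℕ) : closure (admG d) ⊆ closedAdmG d :=
  closure_minimal (admG_subset_closedAdmG d) (isClosed_closedAdmG d)

lemma smul_mem_admG {d : ℕ} {c : ℝ} (hc : 0 < c) {U : EulerState d} (hU : U ∈ admG d) :
    c • U ∈ admG d := by
  obtain ⟨hρ, hm⟩ := mem_admG_iff.mp hU
  refine mem_admG_iff.mpr ⟨mul_pos hc hρ, ?_⟩
  simp only [Prod.smul_fst, Prod.smul_snd, smul_eq_mul, norm_smul, Real.norm_of_nonneg hc.le]
  nlinarith [mul_pos hc hc]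

lemma smul_mem_closedAdmG {d : ℕ} {c : ℝ} (hc : 0 ≤ c) {U : EulerState d}
    (hU : U ∈ closedAdmG d) : c • U ∈ closedAdmG d := by
  obtain ⟨hρ, hE, hm⟩ := hU
  refine ⟨mul_nonneg hc hρ, mul_nonneg hc hE, ?_⟩
  simp only [Prod.smul_fst, Prod.smul_snd, smul_eq_mul, norm_smul, Real.norm_of_nonneg hc]
  nlinarith [mul_nonneg hc hc]

lemma add_mem_admG {d : ℕ} {U V : EulerState d} (hU : U ∈ admG d) (hV : V ∈ closedAdmG d) :
    U + V ∈ admG d := by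
  obtain ⟨hρU, hmU⟩ := mem_admG_iff.mp hU
  obtain ⟨hρV, hEV, hmV⟩ := hV
  exact mem_admG_iff.mpr ⟨add_pos_of_pos_of_nonneg hρU hρV,
    norm_add_sq_lt hρU.le hmU hρV hEV hmV⟩

theorem admG_conic_general {d : ℕ} (lam₁ lam₀ : ℝ)
    (hlam₁ : 0 < lam₁) (hlam₀ : 0 ≤ lam₀)
    (U₁ : EulerState d) (hU₁ : U₁ ∈ admG d)
    (U₀ : EulerState d) (hU₀ : U₀ ∈ closure (admG d)) :
    lam₁ • U₁ + lam₀ • U₀ ∈ admG d :=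
  add_mem_admG (smul_mem_admG hlam₁ hU₁)
    (smul_mem_closedAdmG hlam₀ (closure_admG_subset d hU₀))

/-- Lemma 2.3: for `λ₁ > 0`, `λ₀ ≥ 0`, `U₁ ∈ G`, `U₀ ∈ Ḡ`,
the state `λ₁U₁ + λ₀U₀` belongs to `G`. -/
theorem admG_conic {d : ℕ} (hd : 1 ≤ d) (lam₁ lam₀ : ℝ)
    (hlam₁ : 0 < lam₁) (hlam₀ : 0 ≤ lam₀)
    (U₁ : EulerState d) (hU₁ : U₁ ∈ admG d)
    (U₀ : EulerState d) (hU₀ : U₀ ∈ closure (admG d)) :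
    lam₁ • U₁ + lam₀ • U₀ ∈ admG d :=
  admG_conic_general lam₁ lam₀ hlam₁ hlam₀ U₁ hU₁ U₀ hU₀
end

section
/- Source-control lemma (Lemma 2.4): for any λ ≥ 0, δ ∈ ℝ, U = (ρ, m, E) ∈ G, and a ∈ ℝ^d, if |δ|·‖a‖/√(2e) ≤ λ, where e = (E − ‖m‖²/(2ρ))/ρ is the specific internal energy of U, then the state λU + δ·(0, ρa, m·a) belongs to Ḡ. -/
open scoped RealInnerProductSpace

/-- The specific internal energy `e = (E − ‖m‖²/(2ρ))/ρ`. -/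
noncomputable def specIntEnergy {d : ℕ} (U : EulerState d) : ℝ := calG U / U.1

/-!
Write `U = (ρ, m, E)` and `V = λU + δ(0, ρa, m·a) = (λρ, λm + δρa, λE + δ m·a)`.
Expanding the square, the cross terms `2λδρ m·a` cancel and
`2 V_ρ V_E − ‖V_m‖² = λ²(2ρE − ‖m‖²) − δ²ρ²‖a‖² = ρ²(2e λ² − δ²‖a‖²) ≥ 0`.
The energy of `V` is nonnegative because `|δ m·a| ≤ λ √(2e) ‖m‖ ≤ λE`, the last step being
AM–GM for `E = ρe + ‖m‖²/(2ρ)`. Finally every `V` with `V_ρ, V_E ≥ 0` and `‖V_m‖² ≤ 2 V_ρ V_E`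
is the limit of the admissible states `V + (ε, 0, ε)`.
-/

theorem two_mul_mul_add_inner_sub_norm_sq {F : Type*} [NormedAddCommGroup F]
    [InnerProductSpace ℝ F] (lam δ ρ E : ℝ) (m a : F) :
    2 * (lam * ρ) * (lam * E + δ * ⟪m, a⟫) - ‖lam • m + (δ * ρ) • a‖ ^ 2
      = lam ^ 2 * (2 * ρ * E - ‖m‖ ^ 2) - (δ * ρ) ^ 2 * ‖a‖ ^ 2 := by
  rw [norm_add_sq_real, norm_smul, norm_smul, real_inner_smul_left, real_inner_smul_right]
  simp only [Real.norm_eq_abs, mul_pow, sq_abs]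
  ring

section EulerState

variable {d : ℕ} {U : EulerState d}

theorem specIntEnergy_pos (hU : U ∈ admG d) : 0 < specIntEnergy U :=
  div_pos hU.2 hU.1

theorem two_mul_mul_sub_norm_sq_eq (hρ : U.1 ≠ 0) :
    2 * U.1 * U.2.2 - ‖U.2.1‖ ^ 2 = U.1 ^ 2 * (2 * specIntEnergy U) := by
  unfold specIntEnergy calG
  field_simp

theorem sqrt_two_mul_specIntEnergy_mul_norm_le (hU : U ∈ admG d) :
    √(2 * specIntEnergy U) * ‖U.2.1‖ ≤ U.2.2 := by
  have hρ : 0 < U.1 := hU.1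
  have hE : 0 ≤ U.2.2 := by
    have : 0 < calG U := hU.2
    unfold calG at this
    have : 0 ≤ ‖U.2.1‖ ^ 2 / (2 * U.1) := by positivity
    linarith
  have hsq : (√(2 * specIntEnergy U) * ‖U.2.1‖) ^ 2 ≤ U.2.2 ^ 2 := by
    rw [mul_pow, Real.sq_sqrt (by linarith [specIntEnergy_pos hU])]
    have hid := two_mul_mul_sub_norm_sq_eq hρ.ne'
    -- `ρ² (E² − 2e‖m‖²) = (ρE − ‖m‖²)²`
    refine le_of_mul_le_mul_left ?_ (pow_pos hρ 2)
    nlinarith [sq_nonneg (U.1 * U.2.2 - ‖U.2.1‖ ^ 2)]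
  exact (pow_le_pow_iff_left₀ (by positivity) hE two_ne_zero).1 hsq

theorem mem_closure_admG_of_norm_sq_le {V : EulerState d} (hρ : 0 ≤ V.1) (hE : 0 ≤ V.2.2)
    (hm : ‖V.2.1‖ ^ 2 ≤ 2 * V.1 * V.2.2) : V ∈ closure (admG d) := by
  have hlim : Filter.Tendsto (fun ε : ℝ => V + ((ε, 0, ε) : EulerState d))
      (nhdsWithin 0 (Set.Ioi 0)) (nhds V) := by
    have hcont : Continuous (fun ε : ℝ => V + ((ε, 0, ε) : EulerState d)) := by fun_prop
    have := (hcont.tendsto 0).mono_left (nhdsWithin_le_nhds (s := Set.Ioi 0))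
    rwa [Prod.mk_zero_zero, Prod.mk_zero_zero, add_zero] at this
  refine mem_closure_of_tendsto hlim (eventually_nhdsWithin_of_forall fun ε (hε : 0 < ε) => ?_)
  have hρε : 0 < V.1 + ε := by linarith
  refine ⟨hρε, ?_⟩
  show 0 < (V.2.2 + ε) - ‖V.2.1 + 0‖ ^ 2 / (2 * (V.1 + ε))
  rw [add_zero, sub_pos, div_lt_iff₀ (by positivity)]
  nlinarith

theorem abs_mul_inner_le_of_abs_mul_norm_le (hU : U ∈ admG d) {lam δ : ℝ} (hlam : 0 ≤ lam)
    {a : EuclideanSpace ℝ (Fin d)} (h : |δ| * ‖a‖ ≤ lam * √(2 * specIntEnergy U)) :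
    |δ * ⟪U.2.1, a⟫| ≤ lam * U.2.2 :=
  calc |δ * ⟪U.2.1, a⟫| ≤ |δ| * ‖a‖ * ‖U.2.1‖ := by
        rw [abs_mul, mul_assoc, mul_comm ‖a‖]
        gcongr
        exact abs_real_inner_le_norm _ _
    _ ≤ lam * √(2 * specIntEnergy U) * ‖U.2.1‖ := by gcongr
    _ ≤ lam * U.2.2 := by
        rw [mul_assoc]
        exact mul_le_mul_of_nonneg_left (sqrt_two_mul_specIntEnergy_mul_norm_le hU) hlam

theorem sq_mul_sq_norm_le_of_abs_mul_norm_le (hU : U ∈ admG d) {lam δ : ℝ}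
    {a : EuclideanSpace ℝ (Fin d)} (h : |δ| * ‖a‖ ≤ lam * √(2 * specIntEnergy U)) :
    (δ * U.1) ^ 2 * ‖a‖ ^ 2 ≤ lam ^ 2 * (2 * U.1 * U.2.2 - ‖U.2.1‖ ^ 2) := by
  have hsq := pow_le_pow_left₀ (by positivity) h 2
  rw [mul_pow, mul_pow, sq_abs, Real.sq_sqrt (by linarith [specIntEnergy_pos hU])] at hsq
  rw [two_mul_mul_sub_norm_sq_eq hU.1.ne']
  nlinarith [sq_nonneg U.1]

end EulerState

theorem admG_source_control_general {d : ℕ} (lam δ : ℝ) (hlam : 0 ≤ lam)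
    (U : EulerState d) (hU : U ∈ admG d) (a : EuclideanSpace ℝ (Fin d))
    (hcond : |δ| * ‖a‖ / Real.sqrt (2 * specIntEnergy U) ≤ lam) :
    lam • U + δ • ((0 : ℝ), U.1 • a, ⟪U.2.1, a⟫) ∈ closure (admG d) := by
  have hbound : |δ| * ‖a‖ ≤ lam * √(2 * specIntEnergy U) :=
    (div_le_iff₀ (Real.sqrt_pos.2 (by linarith [specIntEnergy_pos hU]))).1 hcond
  have hE := abs_mul_inner_le_of_abs_mul_norm_le hU hlam hbound
  have hsq := sq_mul_sq_norm_le_of_abs_mul_norm_le hU hbound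
  obtain ⟨ρ, m, E⟩ := U
  have hV : lam • ((ρ, m, E) : EulerState d) + δ • ((0 : ℝ), ρ • a, ⟪m, a⟫)
      = (lam * ρ, lam • m + (δ * ρ) • a, lam * E + δ * ⟪m, a⟫) := by
    ext <;> simp [smul_smul]
  rw [hV]
  refine mem_closure_admG_of_norm_sq_le (mul_nonneg hlam hU.1.le)
    (by linarith [neg_abs_le (δ * ⟪m, a⟫)]) ?_
  linarith [two_mul_mul_add_inner_sub_norm_sq lam δ ρ E m a]

/-- Lemma 2.4: if `|δ|·‖a‖/√(2e) ≤ λ` then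
`λU + δ(0, ρa, m·a) ∈ Ḡ`. -/
theorem admG_source_control {d : ℕ} (hd : 1 ≤ d) (lam δ : ℝ) (hlam : 0 ≤ lam)
    (U : EulerState d) (hU : U ∈ admG d) (a : EuclideanSpace ℝ (Fin d))
    (hcond : |δ| * ‖a‖ / Real.sqrt (2 * specIntEnergy U) ≤ lam) :
    lam • U + δ • ((0 : ℝ), U.1 • a, ⟪U.2.1, a⟫) ∈ closure (admG d) :=
  admG_source_control_general lam δ hlam U hU a hcond
end

section
/- Lax–Friedrichs-type flux positivity (Lemma 2.5): for any U ∈ G, any unit vector n ∈ ℝ^d, and any λ ∈ ℝ satisfying |λ|·α_n(U) ≤ 1, the state U − λ F(U)·n belongs to G. -/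
open scoped RealInnerProductSpace

/-- The pressure `p = (γ−1)(E − ‖m‖²/(2ρ))`. -/
noncomputable def press {d : ℕ} (γ : ℝ) (U : EulerState d) : ℝ := (γ - 1) * calG U

/-- The directional Euler flux
`F(U)·n = (m·n, (m·n/ρ) m + p n, (E+p)(m·n)/ρ)`. -/
noncomputable def eulerFluxDir {d : ℕ} (γ : ℝ) (U : EulerState d)
    (n : EuclideanSpace ℝ (Fin d)) : EulerState d :=
  (⟪U.2.1, n⟫, (⟪U.2.1, n⟫ / U.1) • U.2.1 + press γ U • n,
    (U.2.2 + press γ U) * ⟪U.2.1, n⟫ / U.1)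

/-- `α_n(U) = |u·n| + √(γp/ρ)`, where `u = m/ρ`. -/
noncomputable def alphaDir {d : ℕ} (γ : ℝ) (U : EulerState d)
    (n : EuclideanSpace ℝ (Fin d)) : ℝ :=
  |⟪U.2.1, n⟫ / U.1| + Real.sqrt (γ * press γ U / U.1)

/-! Write `b = m·n` and `A = 1 − λb/ρ`. Then `U − λF(U)·n` has density `ρA`, momentum
`A m − λp n` and energy `AE − λpb/ρ`, which gives the exact identity
`𝒢(U − λF(U)·n) = A 𝒢(U) − (λp)²/(2ρA)`.
The CFL condition `|λ|α_n(U) ≤ 1` yields `A ≥ |λ|c` with `c² = γp/ρ`, hence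
`2ρA²𝒢(U) ≥ 2γλ²p𝒢(U) = 2γ/(γ−1)·(λp)² > (λp)²`. -/

lemma norm_smul_sub_smul_unit_sq {d : ℕ} {n : EuclideanSpace ℝ (Fin d)} (hn : ‖n‖ = 1)
    (m : EuclideanSpace ℝ (Fin d)) (a c : ℝ) :
    ‖a • m - c • n‖ ^ 2 = a ^ 2 * ‖m‖ ^ 2 - 2 * a * c * ⟪m, n⟫ + c ^ 2 := by
  rw [norm_sub_sq_real, norm_smul, norm_smul, real_inner_smul_left, real_inner_smul_right, hn,
    Real.norm_eq_abs, Real.norm_eq_abs, mul_pow, sq_abs, mul_one, sq_abs]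
  ring

lemma fst_sub_smul_eulerFluxDir {d : ℕ} (γ lam : ℝ) (U : EulerState d)
    (n : EuclideanSpace ℝ (Fin d)) (hρ : U.1 ≠ 0) :
    (U - lam • eulerFluxDir γ U n).1 = U.1 * (1 - lam * (⟪U.2.1, n⟫ / U.1)) := by
  change U.1 - lam * ⟪U.2.1, n⟫ = _
  field_simp

lemma calG_sub_smul_eulerFluxDir {d : ℕ} (γ lam : ℝ) (U : EulerState d)
    {n : EuclideanSpace ℝ (Fin d)} (hn : ‖n‖ = 1) (hρ : U.1 ≠ 0)
    (hA : 1 - lam * (⟪U.2.1, n⟫ / U.1) ≠ 0) :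
    calG (U - lam • eulerFluxDir γ U n) =
      (1 - lam * (⟪U.2.1, n⟫ / U.1)) * calG U
        - (lam * press γ U) ^ 2 / (2 * U.1 * (1 - lam * (⟪U.2.1, n⟫ / U.1))) := by
  obtain ⟨ρ, m, E⟩ := U
  set A := 1 - lam * (⟪m, n⟫ / ρ)
  set p := press γ (ρ, m, E)
  have hmomentum : m - lam • ((⟪m, n⟫ / ρ) • m + p • n) = A • m - (lam * p) • n := by
    module
  change E - lam * ((E + p) * ⟪m, n⟫ / ρ)
      - ‖m - lam • ((⟪m, n⟫ / ρ) • m + p • n)‖ ^ 2 / (2 * (ρ - lam * ⟪m, n⟫)) = _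
  rw [hmomentum, norm_smul_sub_smul_unit_sq hn, calG]
  have hρA : ρ - lam * ⟪m, n⟫ = ρ * A := by simp only [A]; field_simp
  rw [hρA]
  field_simp
  simp only [A]
  field_simp
  ring

lemma abs_mul_le_one_sub_mul_of_abs_mul_add_le {lam x c : ℝ} (h : |lam| * (|x| + c) ≤ 1) :
    |lam| * c ≤ 1 - lam * x := by
  have : lam * x ≤ |lam| * |x| := (le_abs_self _).trans (abs_mul lam x).le
  linarith [mul_add |lam| |x| c]

lemma sq_mul_pressure_lt {γ ρ G lam A : ℝ} (hγ : 1 < γ) (hρ : 0 < ρ) (hG : 0 < G)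
    (hlam : lam ≠ 0) (hA : |lam| * √(γ * ((γ - 1) * G) / ρ) ≤ A) :
    (lam * ((γ - 1) * G)) ^ 2 < A * G * (2 * ρ * A) := by
  have hsound : lam ^ 2 * (γ * ((γ - 1) * G) / ρ) ≤ A ^ 2 := by
    have := pow_le_pow_left₀ (by positivity) hA 2
    rwa [mul_pow, sq_abs, Real.sq_sqrt (by have := hγ.le; positivity)] at this
  have hsound' : lam ^ 2 * (γ * ((γ - 1) * G)) ≤ ρ * A ^ 2 := by
    rwa [mul_div_assoc', div_le_iff₀ hρ, mul_comm (A ^ 2)] at hsound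
  have hpos : 0 < lam ^ 2 * (γ - 1) * G ^ 2 := by
    have := sub_pos.2 hγ
    positivity
  nlinarith

theorem LF_flux_positivity_general {d : ℕ} (γ : ℝ) (hγ : 1 < γ)
    (U : EulerState d) (hU : U ∈ admG d) (n : EuclideanSpace ℝ (Fin d))
    (hn : ‖n‖ = 1) (lam : ℝ) (hlam : |lam| * alphaDir γ U n ≤ 1) :
    U - lam • eulerFluxDir γ U n ∈ admG d := by
  rcases eq_or_ne lam 0 with rfl | hlam0
  · simpa only [zero_smul, sub_zero] using hU
  obtain ⟨hρ, hG⟩ := hU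
  have hc : 0 < √(γ * press γ U / U.1) := by
    have hp : 0 < press γ U := mul_pos (sub_pos.2 hγ) hG
    positivity
  have hAc := abs_mul_le_one_sub_mul_of_abs_mul_add_le hlam
  have hA : 0 < 1 - lam * (⟪U.2.1, n⟫ / U.1) := (mul_pos (abs_pos.2 hlam0) hc).trans_le hAc
  refine ⟨?_, ?_⟩
  · rw [fst_sub_smul_eulerFluxDir γ lam U n hρ.ne']
    positivity
  · rw [calG_sub_smul_eulerFluxDir γ lam U hn hρ.ne' hA.ne', sub_pos, div_lt_iff₀ (by positivity)]
    exact sq_mul_pressure_lt hγ hρ hG hlam0 hAc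

/-- Lemma 2.5: for `U ∈ G`, a unit vector `n`, and any `λ` with
`|λ|·α_n(U) ≤ 1`, the state `U − λ F(U)·n` belongs to `G`. -/
theorem LF_flux_positivity {d : ℕ} (hd : 1 ≤ d) (γ : ℝ) (hγ : 1 < γ)
    (U : EulerState d) (hU : U ∈ admG d) (n : EuclideanSpace ℝ (Fin d))
    (hn : ‖n‖ = 1) (lam : ℝ) (hlam : |lam| * alphaDir γ U n ≤ 1) :
    U - lam • eulerFluxDir γ U n ∈ admG d :=
  LF_flux_positivity_general γ hγ U hU n hn lam hlam
end
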